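/- arXiv:2005.10712 — 6 statements merged into one kernel-verified Lean document; each statement's English description precedes it below -/
import Mathlib

section
/- For every positive integer m and every integer i with 1 ≤ i ≤ m, the i-th iterate of Q at 2^m + 1 satisfies Q^i(2^m + 1) = 2^{m-i}·(2^m + 1); in particular Q^m(2^m + 1) = 2^m + 1, so 2^m + 1 lies on a cycle of Q of length m. -/
/-- The divide-or-choose-2 map: `Q n = n/2` if `n` is even, `Q n = n*(n-1)/2` if `n` is odd. -/
def Q (n : ℕ) : ℕ := if n % 2 = 0 then n / 2 else n * (n - 1) / 2

lemma Q_key (m : ℕ) (hm : 0 < m) : ∀ i : ℕ, 1 ≤ i → i ≤ m →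
    Q^[i] (2 ^ m + 1) = 2 ^ (m - i) * (2 ^ m + 1) := by
  intro i
  induction i with
  | zero => intro h; omega
  | succ n ih =>
    intro _ hle
    rcases Nat.eq_zero_or_pos n with h0 | hpos
    · subst h0
      show Q (2 ^ m + 1) = _
      unfold Q
      have hodd : (2 ^ m + 1) % 2 = 1 := by
        have : 2 ^ m % 2 = 0 := by
          have h3 : 2 ^ m = 2 * 2 ^ (m - 1) := by rw [← pow_succ']; congr 1; omega
          rw [h3, Nat.mul_mod_right]
        omega
      rw [if_neg (by omega)]
      have : (2 ^ m + 1) * (2 ^ m + 1 - 1) = 2 ^ (m - 1) * (2 ^ m + 1) * 2 := by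
        have : 2 ^ m = 2 ^ (m - 1) * 2 := by
          rw [← pow_succ]; congr 1; omega
        simp [this]; ring
      rw [this, Nat.mul_div_cancel _ (by norm_num)]
    · rw [Function.iterate_succ_apply', ih hpos (by omega)]
      unfold Q
      have h2 : 2 ^ (m - n) * (2 ^ m + 1) % 2 = 0 := by
        have e : 2 ^ (m - n) * (2 ^ m + 1) = 2 * (2 ^ (m - n - 1) * (2 ^ m + 1)) := by
          have h3 : 2 ^ (m - n) = 2 * 2 ^ (m - n - 1) := by
            rw [← pow_succ']; congr 1; omega
          rw [h3]; ring
        rw [e, Nat.mul_mod_right]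
      rw [if_pos h2]
      have : 2 ^ (m - n) = 2 ^ (m - (n + 1)) * 2 := by
        rw [← pow_succ]; congr 1; omega
      rw [this, mul_assoc, mul_comm 2, ← mul_assoc, Nat.mul_div_cancel _ (by norm_num)]

/-- For every positive integer `m` and every `i` with `1 ≤ i ≤ m`,
`Q^[i] (2^m + 1) = 2^(m-i) * (2^m + 1)`; in particular `Q^[m] (2^m+1) = 2^m+1`,
so `2^m + 1` lies on a cycle of `Q` of length `m`. -/
theorem stmt_0 (m : ℕ) (hm : 0 < m) :
    (∀ i : ℕ, 1 ≤ i → i ≤ m → Q^[i] (2 ^ m + 1) = 2 ^ (m - i) * (2 ^ m + 1)) ∧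
    Q^[m] (2 ^ m + 1) = 2 ^ m + 1 := by
  refine ⟨Q_key m hm, ?_⟩
  have := Q_key m hm m hm le_rfl
  simpa using this
end

section
/- For every positive integer m, the point 2^m + 1 is a periodic point of Q of minimal period exactly m: Q^m(2^m + 1) = 2^m + 1, and Q^i(2^m + 1) ≠ 2^m + 1 for every i with 1 ≤ i < m. -/
lemma Q_aux (m : ℕ) : ∀ i : ℕ, 1 ≤ i → i ≤ m + 1 →
    Q^[i] (2 ^ (m + 1) + 1) = 2 ^ (2 * (m + 1) - i) + 2 ^ (m + 1 - i) := by
  intro i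
  induction i with
  | zero => omega
  | succ j ih =>
    intro _ hle
    rcases Nat.eq_zero_or_pos j with hj | hj
    · subst hj
      simp only [Function.iterate_succ_apply, Function.iterate_zero_apply, Q]
      have h2 : (2 ^ (m + 1) + 1) % 2 = 1 := by
        have : 2 ^ (m + 1) % 2 = 0 := by
          simp [Nat.pow_succ, Nat.mul_mod]
        omega
      rw [if_neg (by omega)]
      have e1 : 2 * (m + 1) - (0 + 1) = 2 * m + 1 := by omega
      have e2 : m + 1 - (0 + 1) = m := by omega
      rw [e1, e2]
      have : (2 ^ (m + 1) + 1) * (2 ^ (m + 1) + 1 - 1) = 2 * (2 ^ (2 * m + 1) + 2 ^ m) := by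
        have : 2 ^ (m + 1) + 1 - 1 = 2 ^ (m + 1) := Nat.add_sub_cancel _ _
        rw [this]; ring
      rw [this]
      omega
    · have hiter : Q^[j + 1] (2 ^ (m + 1) + 1) = Q (Q^[j] (2 ^ (m + 1) + 1)) := by
        rw [Function.iterate_succ_apply']
      rw [hiter, ih hj (by omega)]
      obtain ⟨a, ha⟩ : ∃ a, 2 * (m + 1) - j = a + 1 := ⟨2 * (m + 1) - j - 1, by omega⟩
      obtain ⟨b, hb⟩ : ∃ b, m + 1 - j = b + 1 := ⟨m + 1 - j - 1, by omega⟩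
      rw [ha, hb]
      have ea : 2 * (m + 1) - (j + 1) = a := by omega
      have eb : m + 1 - (j + 1) = b := by omega
      rw [ea, eb, Q]
      have hval : 2 ^ (a + 1) + 2 ^ (b + 1) = 2 * (2 ^ a + 2 ^ b) := by ring
      rw [if_pos (by omega)]
      omega

/-- `2^m + 1` is a periodic point of `Q` of minimal period exactly `m`. -/
theorem stmt_1 (m : ℕ) (hm : 0 < m) :
    Q^[m] (2 ^ m + 1) = 2 ^ m + 1 ∧
    ∀ i : ℕ, 1 ≤ i → i < m → Q^[i] (2 ^ m + 1) ≠ 2 ^ m + 1 := by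
  obtain ⟨k, rfl⟩ : ∃ k, m = k + 1 := ⟨m - 1, by omega⟩
  constructor
  · have := Q_aux k (k + 1) (by omega) le_rfl
    rw [this]
    have : 2 * (k + 1) - (k + 1) = k + 1 := by omega
    rw [this]
    simp
  · intro i h1 h2 hcontra
    rw [Q_aux k i h1 (by omega)] at hcontra
    -- LHS is even, RHS is odd
    obtain ⟨a, ha⟩ : ∃ a, 2 * (k + 1) - i = a + 1 := ⟨2 * (k + 1) - i - 1, by omega⟩
    obtain ⟨b, hb⟩ : ∃ b, k + 1 - i = b + 1 := ⟨k + 1 - i - 1, by omega⟩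
    rw [ha, hb] at hcontra
    have h2k : 2 ^ (k + 1) % 2 = 0 := by simp [Nat.pow_succ, Nat.mul_mod]
    have hA : 2 ^ (a + 1) % 2 = 0 := by simp [Nat.pow_succ, Nat.mul_mod]
    have hB : 2 ^ (b + 1) % 2 = 0 := by simp [Nat.pow_succ, Nat.mul_mod]
    omega
end

section
/- For every positive integer m and every odd positive integer k, the m-th iterate of Q at 2^m·k + 1 satisfies Q^m(2^m·k + 1) = k·(2^m·k + 1). -/
lemma iterQ (j a : ℕ) : Q^[j] (2 ^ j * a) = a := by
  induction j with
  | zero => simp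
  | succ j ih =>
    rw [Function.iterate_succ_apply]
    have h : Q (2 ^ (j + 1) * a) = 2 ^ j * a := by
      have he : 2 ^ (j + 1) * a = 2 * (2 ^ j * a) := by ring
      unfold Q
      rw [he]
      simp [Nat.mul_mod_right]
    rw [h, ih]

/-- For every positive integer `m` and odd positive `k`,
`Q^[m] (2^m * k + 1) = k * (2^m * k + 1)`. -/
theorem stmt_7 (m k : ℕ) (hm : 0 < m) (hk_pos : 0 < k) (hk_odd : k % 2 = 1) :
    Q^[m] (2 ^ m * k + 1) = k * (2 ^ m * k + 1) := by
  obtain ⟨m', rfl⟩ := Nat.exists_eq_add_of_lt hm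
  simp only [zero_add]
  set n := 2 ^ (m' + 1) * k + 1 with hn
  have hodd : n % 2 = 1 := by
    have : n = 2 * (2 ^ m' * k) + 1 := by rw [hn]; ring
    omega
  have hQ : Q n = 2 ^ m' * (k * n) := by
    unfold Q
    rw [hodd]
    simp only [if_neg (by omega : ¬ (1 : ℕ) = 0)]
    have h1 : n - 1 = 2 * (2 ^ m' * k) := by
      have : n = 2 * (2 ^ m' * k) + 1 := by rw [hn]; ring
      omega
    rw [h1]
    rw [show n * (2 * (2 ^ m' * k)) = 2 * (2 ^ m' * (k * n)) by ring]
    omega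
  rw [Function.iterate_succ_apply, hQ, iterQ]
end

section
/- For all positive integers l and m, the orbit of the initial value x₀ = 2^l·(2^m + 1) under Q ends in a cycle of length m: Q^l(x₀) = 2^m + 1 and Q^{l+m}(x₀) = Q^l(x₀), so the orbit of x₀ is eventually periodic with period m. -/
lemma Q_halve (k n : ℕ) : Q^[k] (2 ^ k * n) = n := by
  induction k with
  | zero => simp
  | succ k ih =>
    rw [Function.iterate_succ_apply]
    have h : Q (2 ^ (k + 1) * n) = 2 ^ k * n := by
      have he : 2 ^ (k + 1) * n = 2 * (2 ^ k * n) := by ring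
      unfold Q
      rw [he, if_pos (by omega)]
      omega
    rw [h, ih]

lemma Q_odd (m : ℕ) (hm : 0 < m) : Q (2 ^ m + 1) = 2 ^ (m - 1) * (2 ^ m + 1) := by
  have he : 2 ^ m = 2 * 2 ^ (m - 1) := by
    rw [← pow_succ']; congr 1; omega
  unfold Q
  rw [if_neg (by omega)]
  simp only [Nat.add_sub_cancel]
  calc (2 ^ m + 1) * 2 ^ m / 2 = (2 ^ m + 1) * (2 * 2 ^ (m - 1)) / 2 := by rw [← he]
    _ = 2 * (2 ^ (m - 1) * (2 ^ m + 1)) / 2 := by ring_nf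
    _ = 2 ^ (m - 1) * (2 ^ m + 1) := by omega

lemma Q_cycle (m : ℕ) (hm : 0 < m) : Q^[m] (2 ^ m + 1) = 2 ^ m + 1 := by
  obtain ⟨k, rfl⟩ : ∃ k, m = k + 1 := ⟨m - 1, by omega⟩
  rw [Function.iterate_succ_apply, Q_odd _ hm]
  simpa using Q_halve k (2 ^ (k + 1) + 1)

/-- For all positive `l, m`, the orbit of `x₀ = 2^l * (2^m + 1)` under `Q`
ends in a cycle of length `m`: `Q^[l] x₀ = 2^m + 1` and `Q^[l+m] x₀ = Q^[l] x₀`. -/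
theorem stmt_9 (l m : ℕ) (hl : 0 < l) (hm : 0 < m) :
    Q^[l] (2 ^ l * (2 ^ m + 1)) = 2 ^ m + 1 ∧
    Q^[l + m] (2 ^ l * (2 ^ m + 1)) = Q^[l] (2 ^ l * (2 ^ m + 1)) := by
  have h1 : Q^[l] (2 ^ l * (2 ^ m + 1)) = 2 ^ m + 1 := Q_halve l _
  refine ⟨h1, ?_⟩
  rw [add_comm, Function.iterate_add_apply, h1, Q_cycle m hm]
end

section
/- Every unbounded orbit of Q converges to infinity: if x₀ ∈ ℕ is such that the sequence (Q^n(x₀)) is unbounded, then Q^n(x₀) → ∞ as n → ∞; in particular an unbounded orbit has no bounded subsequence. -/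
open Filter Function

namespace Function

theorem finite_range_iterate_of_iterate_eq_of_lt {α : Type*} (f : α → α) {x : α} {a c : ℕ}
    (hac : a < c) (h : f^[a] x = f^[c] x) : (Set.range fun n => f^[n] x).Finite := by
  have hper : IsPeriodicPt f (c - a) (f^[a] x) := by
    rw [IsPeriodicPt, IsFixedPt, ← iterate_add_apply, Nat.sub_add_cancel hac.le, h]
  refine ((Set.finite_Iio c).image fun n => f^[n] x).subset ?_
  rintro _ ⟨n, rfl⟩
  rcases lt_or_ge n a with hn | hn
  · exact ⟨n, hn.trans hac, rfl⟩
  · refine ⟨(n - a) % (c - a) + a, ?_, ?_⟩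
    · have := Nat.mod_lt (n - a) (Nat.sub_pos_of_lt hac)
      rw [Set.mem_Iio]
      omega
    · change f^[_] x = f^[n] x
      rw [iterate_add_apply, hper.iterate_mod_apply, ← iterate_add_apply, Nat.sub_add_cancel hn]

theorem finite_range_iterate_of_iterate_eq {α : Type*} (f : α → α) {x : α} {a c : ℕ}
    (hac : a ≠ c) (h : f^[a] x = f^[c] x) : (Set.range fun n => f^[n] x).Finite := by
  rcases hac.lt_or_gt with hac | hca
  · exact finite_range_iterate_of_iterate_eq_of_lt f hac h
  · exact finite_range_iterate_of_iterate_eq_of_lt f hca h.symm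

theorem tendsto_iterate_atTop_of_not_bddAbove {α : Type*} [LinearOrder α]
    [LocallyFiniteOrderBot α] {f : α → α} {x : α}
    (h : ¬ BddAbove (Set.range fun n => f^[n] x)) :
    Tendsto (fun n => f^[n] x) atTop atTop := by
  refine tendsto_atTop.2 fun b => ?_
  by_contra hb
  rw [not_eventually, Nat.frequently_atTop_iff_infinite] at hb
  obtain ⟨a, -, c, -, hac, heq⟩ := hb.exists_ne_map_eq_of_mapsTo
    (fun n hn => Set.mem_Iio.2 (not_le.1 hn)) (Set.finite_Iio b)
  have : Nonempty α := ⟨x⟩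
  exact h (finite_range_iterate_of_iterate_eq f hac heq).bddAbove

end Function

/-- Every unbounded orbit of `Q` converges to infinity. -/
theorem stmt_14 (x₀ : ℕ) (h : ¬ ∃ M : ℕ, ∀ n : ℕ, Q^[n] x₀ ≤ M) :
    Filter.Tendsto (fun n : ℕ => Q^[n] x₀) Filter.atTop Filter.atTop := by
  refine tendsto_iterate_atTop_of_not_bddAbove fun ⟨M, hM⟩ => h ⟨M, fun n => ?_⟩
  exact hM ⟨n, rfl⟩
end

section
/- A natural number n is a periodic point of Q (i.e., Q^p(n) = n for some positive integer p) if and only if n = 0 or n = 2^i·(2^m + 1) for some positive integer m and some integer i with 0 ≤ i ≤ m − 1. -/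
lemma Q_two_mul (x : ℕ) : Q (2 * x) = x := by
  simp [Q, Nat.mul_mod_right, Nat.mul_div_cancel_left]

lemma Q_odd_s15 {x : ℕ} (h : x % 2 = 1) : Q x = x * (x - 1) / 2 := by
  simp [Q, h]

lemma Q_zero : Q 0 = 0 := rfl
lemma Q_one : Q 1 = 0 := rfl

lemma Qiter_pow_mul (u : ℕ) :
    ∀ k j, k ≤ j → Q^[k] (2 ^ j * u) = 2 ^ (j - k) * u := by
  intro k
  induction k with
  | zero => intro j _; simp
  | succ k ih =>
    intro j hj
    obtain ⟨j', rfl⟩ : ∃ j', j = j' + 1 := ⟨j - 1, by omega⟩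
    rw [Function.iterate_succ_apply, pow_succ,
      show 2 ^ j' * 2 * u = 2 * (2 ^ j' * u) by ring, Q_two_mul, ih j' (by omega)]
    congr 2
    omega

lemma two_pow_succ_one_mod {m : ℕ} (hm : 0 < m) : (2 ^ m + 1) % 2 = 1 := by
  have : (2:ℕ) ∣ 2 ^ m := dvd_pow_self 2 hm.ne'
  omega

lemma Q_special {m : ℕ} (hm : 0 < m) : Q (2 ^ m + 1) = 2 ^ (m - 1) * (2 ^ m + 1) := by
  rw [Q_odd_s15 (two_pow_succ_one_mod hm)]
  have h : 2 ^ m = 2 * 2 ^ (m - 1) := by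
    rw [← pow_succ']
    congr 1
    omega
  simp only [Nat.add_sub_cancel]
  rw [h, show (2 * 2 ^ (m-1) + 1) * (2 * 2 ^ (m - 1)) = 2 * (2 ^ (m-1) * (2 * 2 ^ (m-1) + 1)) by ring,
    Nat.mul_div_cancel_left _ (by norm_num)]

lemma orbit_special {m : ℕ} (hm : 0 < m) (q : ℕ) :
    ∃ j, j ≤ m - 1 ∧ Q^[q] (2 ^ m + 1) = 2 ^ j * (2 ^ m + 1) := by
  induction q with
  | zero => exact ⟨0, Nat.zero_le _, by simp⟩
  | succ q ih =>
    obtain ⟨j, hj, hq⟩ := ih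
    rw [Function.iterate_succ_apply', hq]
    rcases Nat.eq_zero_or_pos j with rfl | hjpos
    · refine ⟨m - 1, le_rfl, ?_⟩
      simpa using Q_special hm
    · obtain ⟨j', rfl⟩ : ∃ j', j = j' + 1 := ⟨j - 1, by omega⟩
      refine ⟨j', by omega, ?_⟩
      rw [pow_succ, show 2 ^ j' * 2 * (2 ^ m + 1) = 2 * (2 ^ j' * (2 ^ m + 1)) by ring, Q_two_mul]

lemma odd_ordCompl {u : ℕ} (hu : u % 2 = 1) : ordCompl[2] u = u := by
  have : u.factorization 2 = 0 := Nat.factorization_eq_zero_of_not_dvd (by omega)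
  simp [this]

lemma ordCompl_Q_mono {x : ℕ} (hx : 2 ≤ x) : ordCompl[2] x ≤ ordCompl[2] (Q x) := by
  rcases Nat.even_or_odd x with he | ho
  · obtain ⟨y, rfl⟩ : ∃ y, x = 2 * y := ⟨x / 2, by have := Nat.even_iff.mp he; omega⟩
    rw [Q_two_mul, Nat.ordCompl_mul,
      show ordCompl[2] 2 = 1 by rw [Nat.Prime.factorization_self Nat.prime_two]; norm_num,
      one_mul]
  · have hxo : x % 2 = 1 := Nat.odd_iff.mp ho
    rw [Q_odd_s15 hxo, Nat.mul_div_assoc x (by omega : (2:ℕ) ∣ x - 1), Nat.ordCompl_mul,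
      odd_ordCompl hxo]
    have h1 : 1 ≤ ordCompl[2] ((x - 1) / 2) := Nat.ordCompl_pos 2 (by omega)
    calc x = x * 1 := (mul_one x).symm
    _ ≤ x * ordCompl[2] ((x - 1) / 2) := Nat.mul_le_mul_left x h1

/-- `n` is a periodic point of `Q` iff `n = 0` or `n = 2^i * (2^m + 1)` for some
positive `m` and some `i` with `0 ≤ i ≤ m - 1`. -/
theorem stmt_15 (n : ℕ) :
    (∃ p : ℕ, 0 < p ∧ Q^[p] n = n) ↔
      n = 0 ∨ ∃ (m i : ℕ), 0 < m ∧ i ≤ m - 1 ∧ n = 2 ^ i * (2 ^ m + 1) := by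
  constructor
  · rintro ⟨p, hp, hper⟩
    rcases Nat.eq_zero_or_pos n with rfl | hn
    · exact Or.inl rfl
    right
    -- orbit never hits 0
    have hmulfix : ∀ N, Q^[p * N] n = n := by
      intro N
      rw [Function.iterate_mul]
      exact Function.iterate_fixed hper N
    have hne0 : ∀ k, Q^[k] n ≠ 0 := by
      intro k hk
      have hbig : k ≤ p * (k + 1) := by nlinarith
      have := hmulfix (k + 1)
      rw [show p * (k+1) = (p * (k+1) - k) + k by omega, Function.iterate_add_apply, hk,
        Function.iterate_fixed Q_zero] at this
      omega
    have hne1 : ∀ k, Q^[k] n ≠ 1 := by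
      intro k hk
      have : Q^[k + 1] n = 0 := by rw [Function.iterate_succ_apply', hk, Q_one]
      exact hne0 _ this
    have h2le : ∀ k, 2 ≤ Q^[k] n := by
      intro k
      have := hne0 k; have := hne1 k; omega
    -- odd part monotone along orbit
    have hmono : Monotone (fun k => ordCompl[2] (Q^[k] n)) := by
      apply monotone_nat_of_le_succ
      intro k
      rw [Function.iterate_succ_apply']
      exact ordCompl_Q_mono (h2le k)
    obtain ⟨i, u, hu2, rfl⟩ := Nat.exists_eq_pow_mul_and_not_dvd hn.ne' 2 (by norm_num)
    have hu : u % 2 = 1 := by omega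
    set n := 2 ^ i * u with hn_def
    -- a convenient large period
    set P := p * (i + 2) with hP
    have hPfix : Q^[P] n = n := hmulfix (i + 2)
    have hPbig : i + 1 < P := by
      have : i + 2 ≤ p * (i + 2) := Nat.le_mul_of_pos_left _ hp
      omega
    have hiu : Q^[i] n = u := by
      rw [hn_def, Qiter_pow_mul u i i le_rfl]
      simp
    -- odd part constant on [0, P]
    have hconst : ∀ k, k ≤ P → ordCompl[2] (Q^[k] n) = ordCompl[2] n := by
      intro k hk
      have h1 : ordCompl[2] (Q^[0] n) ≤ ordCompl[2] (Q^[k] n) := hmono (Nat.zero_le k)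
      have h2 : ordCompl[2] (Q^[k] n) ≤ ordCompl[2] (Q^[P] n) := hmono hk
      rw [hPfix] at h2
      simp only [Function.iterate_zero_apply] at h1
      omega
    -- at step i we have u, odd, ≥ 3; equality forces (u-1)/2 a power of 2
    have hu2le : 2 ≤ u := by have := h2le i; rwa [hiu] at this
    have hu3 : 3 ≤ u := by omega
    have heq : ordCompl[2] (Q^[i + 1] n) = ordCompl[2] (Q^[i] n) := by
      rw [hconst _ (by omega), hconst _ (by omega)]
    rw [Function.iterate_succ_apply', hiu, Q_odd_s15 hu,
      Nat.mul_div_assoc u (by omega : (2:ℕ) ∣ u - 1), Nat.ordCompl_mul, odd_ordCompl hu] at heq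
    have hv1 : ordCompl[2] ((u - 1) / 2) = 1 :=
      Nat.mul_left_cancel (show 0 < u by omega) (heq.trans (mul_one u).symm)
    have hpow : (u - 1) / 2 = 2 ^ (((u - 1) / 2).factorization 2) := by
      have := Nat.ordProj_mul_ordCompl_eq_self ((u - 1) / 2) 2
      rw [hv1, mul_one] at this
      omega
    set v := ((u - 1) / 2).factorization 2 with hv
    have hu_eq : u = 2 ^ (v + 1) + 1 := by
      have : u - 1 = 2 * ((u - 1) / 2) := by omega
      rw [hpow] at this
      rw [pow_succ]
      omega
    -- n is in the orbit of u
    have hnQ : Q^[P - i] u = n := by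
      rw [← hiu, ← Function.iterate_add_apply, show P - i + i = P by omega, hPfix]
    obtain ⟨j, hj, hQj⟩ := orbit_special (m := v + 1) (by omega) (P - i)
    rw [← hu_eq, hnQ] at hQj
    exact ⟨v + 1, j, by omega, hj, hQj.trans (by rw [hu_eq])⟩
  · rintro (rfl | ⟨m, i, hm, hi, rfl⟩)
    · exact ⟨1, one_pos, rfl⟩
    refine ⟨m, hm, ?_⟩
    have h1 : Q^[i] (2 ^ i * (2 ^ m + 1)) = 2 ^ m + 1 := by
      rw [Qiter_pow_mul _ i i le_rfl]; simp
    have h2 : Q^[(m - 1 - i) + (i + 1)] (2 ^ i * (2 ^ m + 1)) = 2 ^ i * (2 ^ m + 1) := by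
      rw [Function.iterate_add_apply, Function.iterate_succ_apply', h1, Q_special hm,
        Qiter_pow_mul _ (m - 1 - i) (m - 1) (by omega)]
      congr 2
      omega
    rw [show (m - 1 - i) + (i + 1) = m by omega] at h2
    exact h2
end
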